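/- The weak order poset of (p,q)-clans with p,q ≥ 1 and p+q=n has exactly C(n,p) maximal elements, namely those clans whose underlying involution is the identity, one for each choice of p positions assigned '+' and q positions assigned '−'. -/

import Mathlib

/-- The number of inversions (Coxeter length) of a permutation of `Fin n`. -/
def invNum {n : ℕ} (w : Equiv.Perm (Fin n)) : ℕ :=
  (Finset.univ.filter fun p : Fin n × Fin n => p.1 < p.2 ∧ w p.2 < w p.1).card

/-- The number of 2-cycles of an involution. -/
def numTwoCycles {n : ℕ} (π : Equiv.Perm (Fin n)) : ℕ :=
  (Finset.univ.filter fun i : Fin n => π i ≠ i).card / 2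

/-- A `(p,q)`-clan: an involution of `S_{p+q}` together with a sign (`true` = `+`,
`false` = `−`) attached to each fixed point, such that `#(+) − #(−) = p − q`.
(Non-fixed points are assigned the junk value `false`.) -/
structure Clan (p q : ℕ) where
  π : Equiv.Perm (Fin (p + q))
  invol : π * π = 1
  sign : Fin (p + q) → Bool
  signFix : ∀ i, π i ≠ i → sign i = false
  charge : (Finset.univ.filter fun i => π i = i ∧ sign i = true).card + q =
    (Finset.univ.filter fun i => π i = i ∧ sign i = false).card + p

/-- The covering relation `c' ⋖ c` of the weak order on `(p,q)`-clans, at consecutive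
positions `a`, `b = a+1`.  Type I (IA/IB/IC): `c.π = s c'.π s` with
`ℓ(c.π) = ℓ(c'.π) − 2`, the signs carried along by `s = (a,b)`.  Type II: `c'` has the
2-cycle `(a,b)`, which is replaced in `c` by two oppositely-signed fixed points, all other
signs unchanged. -/
def ClanCov {p q : ℕ} (a b : Fin (p + q)) (c' c : Clan p q) : Prop :=
  (b : ℕ) = (a : ℕ) + 1 ∧
  ((c.π = Equiv.swap a b * c'.π * Equiv.swap a b ∧ invNum c.π + 2 = invNum c'.π ∧
      ∀ x, c'.π x = x → c.sign (Equiv.swap a b x) = c'.sign x) ∨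
    (c'.π a = b ∧ c.π = Equiv.swap a b * c'.π ∧ c.sign a = !c.sign b ∧
      ∀ x, x ≠ a → x ≠ b → c.sign x = c'.sign x))


/-!
If the involution `π` of a clan is not the identity, it has a descent `π (a+1) < π a`.
If `π` swaps `a` and `a+1`, this strand can be split into two oppositely signed fixed points.
Otherwise, with `s = (a a+1)`, the involution `s π s` has two inversions fewer than `π`:
`s π` loses the inversion `(a, a+1)` of `π⁻¹ = π`, and since `{π a, π (a+1)} ≠ {a, a+1}`
the descent survives in `s π`, so `s π s` loses one more. Hence only identity clans are maximal;
these have length `0` and no strands, so no move applies to them, and they are determined by their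
`p`-element set of `+` positions.
-/

open Equiv Finset

section Inversions

variable {n : ℕ}

lemma swap_lt_swap_of_lt {a b x y : Fin n} (hab : (b : ℕ) = a + 1) (hxy : x < y)
    (hne : ¬(x = a ∧ y = b)) : swap a b x < swap a b y := by
  simp only [swap_apply_def, Fin.lt_def, Fin.ext_iff] at *
  split_ifs <;> omega

lemma invNum_mul_swap_add_one {w : Perm (Fin n)} {a b : Fin n} (hab : (b : ℕ) = a + 1)
    (h : w b < w a) : invNum (w * swap a b) + 1 = invNum w := by
  set s := swap a b
  have hmem : (a, b) ∈ univ.filter fun p : Fin n × Fin n => p.1 < p.2 ∧ w p.2 < w p.1 := by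
    simp only [mem_filter, mem_univ, true_and, Fin.lt_def, hab]; omega
  have key : (univ.filter fun p : Fin n × Fin n => p.1 < p.2 ∧ (w * s) p.2 < (w * s) p.1) =
      ((univ.filter fun p : Fin n × Fin n => p.1 < p.2 ∧ w p.2 < w p.1).erase (a, b)).map
        (s.prodCongr s).toEmbedding := by
    -- `swap a b` is monotone on all pairs but `(a, b)`, so it carries the inversions of `w`
    -- other than `(a, b)` bijectively onto those of `w * swap a b`.
    refine Finset.ext fun ⟨x, y⟩ => ?_
    rw [mem_map_equiv, mem_filter, mem_erase, mem_filter]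
    simp only [prodCongr_symm, symm_swap, prodCongr_apply, Prod.map, mem_univ, true_and,
      Perm.mul_apply, ne_eq, Prod.mk.injEq, s]
    constructor
    · rintro ⟨hxy, hw⟩
      have hab' : ¬(x = a ∧ y = b) := by
        rintro ⟨rfl, rfl⟩
        simp only [swap_apply_left, swap_apply_right] at hw
        exact hw.not_gt h
      refine ⟨?_, swap_lt_swap_of_lt hab hxy hab', hw⟩
      rintro ⟨hx, hy⟩
      rw [swap_apply_eq_iff, swap_apply_left] at hx
      rw [swap_apply_eq_iff, swap_apply_right] at hy
      rw [hx, hy, Fin.lt_def] at hxy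
      omega
    · rintro ⟨hne, hxy, hw⟩
      exact ⟨by simpa using swap_lt_swap_of_lt hab hxy hne, hw⟩
  rw [invNum, key, card_map, card_erase_of_mem hmem, invNum]
  have := card_pos.2 ⟨_, hmem⟩
  omega

lemma invNum_inv (w : Perm (Fin n)) : invNum w⁻¹ = invNum w := by
  refine card_nbij' (fun p => (w⁻¹ p.2, w⁻¹ p.1)) (fun p => (w p.2, w p.1)) ?_ ?_ ?_ ?_ <;>
    intro p <;> simp [and_comm]

lemma invNum_swap_mul_add_one {w : Perm (Fin n)} {a b : Fin n} (hab : (b : ℕ) = a + 1)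
    (h : w⁻¹ b < w⁻¹ a) : invNum (swap a b * w) + 1 = invNum w := by
  rw [← invNum_inv (swap a b * w), mul_inv_rev, swap_inv, invNum_mul_swap_add_one hab h,
    invNum_inv]

lemma invNum_swap_mul_mul_swap_add_two {π : Perm (Fin n)} (hπ : π * π = 1) {a b : Fin n}
    (hab : (b : ℕ) = a + 1) (hdes : π b < π a) (hne : π a ≠ b) :
    invNum (swap a b * π * swap a b) + 2 = invNum π := by
  have hπinv : π⁻¹ = π := inv_eq_of_mul_eq_one_right hπ
  have h₁ := invNum_swap_mul_add_one (w := π) hab (by rwa [hπinv])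
  have h₂ := invNum_mul_swap_add_one (w := swap a b * π) hab
    (swap_lt_swap_of_lt hab hdes fun h => hne h.2)
  omega

lemma invNum_one : invNum (1 : Perm (Fin n)) = 0 := by
  rw [invNum, card_eq_zero, filter_eq_empty_iff]
  exact fun p _ h => h.2.not_gt h.1

lemma Equiv.Perm.exists_descent_of_ne_one {π : Perm (Fin n)} (h : π ≠ 1) :
    ∃ a b : Fin n, (b : ℕ) = a + 1 ∧ π b < π a := by
  contrapose! h
  cases n with
  | zero => exact Subsingleton.elim _ _
  | succ m =>
    have hmono : StrictMono π := Fin.strictMono_iff_lt_succ.2 fun i =>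
      (h i.castSucc i.succ (by simp)).lt_of_ne
        (π.injective.ne (Fin.castSucc_lt_succ (i := i)).ne)
    exact Equiv.ext (congrFun ((hmono.range_inj strictMono_id).1 (by simp)))

end Inversions

namespace Clan

variable {p q : ℕ}

lemma ext {c c' : Clan p q} (hπ : c.π = c'.π) (hsign : c.sign = c'.sign) : c = c' := by
  cases c; cases c'; cases hπ; cases hsign; rfl

lemma involutive_π (c : Clan p q) : Function.Involutive c.π :=
  Perm.ext_iff.1 c.invol

def conj (c : Clan p q) (σ : Perm (Fin (p + q))) : Clan p q where
  π := σ * c.π * σ⁻¹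
  invol := by
    rw [show σ * c.π * σ⁻¹ * (σ * c.π * σ⁻¹) = σ * (c.π * c.π) * σ⁻¹ by group, c.invol]
    group
  sign x := c.sign (σ⁻¹ x)
  signFix x hx := c.signFix _ fun h =>
    hx (by rw [Perm.mul_apply, Perm.mul_apply, h, ← Perm.eq_inv_iff_eq])
  charge := by
    have key : ∀ t, #(univ.filter fun x => (σ * c.π * σ⁻¹) x = x ∧ c.sign (σ⁻¹ x) = t) =
        #(univ.filter fun x => c.π x = x ∧ c.sign x = t) := by
      refine fun t => card_equiv σ⁻¹ fun x => ?_
      rw [mem_filter, mem_filter, Perm.mul_apply, Perm.mul_apply, ← Perm.eq_inv_iff_eq]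
      simp only [mem_univ, true_and]
    simpa only [key] using c.charge

lemma π_mul_swap_comm (c : Clan p q) {a b : Fin (p + q)} (h : c.π a = b) :
    c.π * swap a b = swap a b * c.π := by
  have hb : c.π b = a := h ▸ c.involutive_π a
  rw [Equiv.mul_swap_eq_swap_mul, h, hb, swap_comm]

lemma swap_mul_π_apply_eq_self_iff (c : Clan p q) {a b : Fin (p + q)} (h : c.π a = b)
    (x : Fin (p + q)) : (swap a b * c.π) x = x ↔ x = a ∨ x = b ∨ c.π x = x := by
  have hb : c.π b = a := h ▸ c.involutive_π a
  by_cases hxa : x = a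
  · simp [hxa, h]
  by_cases hxb : x = b
  · simp [hxb, hb]
  have hπxa : c.π x ≠ a := fun hx => hxb (c.π.injective (hx.trans hb.symm))
  have hπxb : c.π x ≠ b := fun hx => hxa (c.π.injective (hx.trans h.symm))
  simp [swap_apply_of_ne_of_ne hπxa hπxb, hxa, hxb]

def splitStrand (c : Clan p q) {a b : Fin (p + q)} (hne : a ≠ b) (h : c.π a = b) :
    Clan p q where
  π := swap a b * c.π
  invol := by
    rw [show swap a b * c.π * (swap a b * c.π) = swap a b * (c.π * swap a b) * c.π by group,
      c.π_mul_swap_comm h,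
      show swap a b * (swap a b * c.π) * c.π = swap a b * swap a b * (c.π * c.π) by group,
      swap_mul_self, c.invol, one_mul]
  sign x := if x = a then true else if x = b then false else c.sign x
  signFix x hx := by
    rw [ne_eq, c.swap_mul_π_apply_eq_self_iff h] at hx
    simp only [not_or] at hx
    simp only [if_neg hx.1, if_neg hx.2.1]
    exact c.signFix x hx.2.2
  charge := by
    have hb : c.π b = a := h ▸ c.involutive_π a
    have hplus : (univ.filter fun x => (swap a b * c.π) x = x ∧
        (if x = a then true else if x = b then false else c.sign x) = true) =
        insert a (univ.filter fun x => c.π x = x ∧ c.sign x = true) := by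
      ext x
      simp only [mem_insert, mem_filter, mem_univ, true_and, c.swap_mul_π_apply_eq_self_iff h]
      grind
    have hminus : (univ.filter fun x => (swap a b * c.π) x = x ∧
        (if x = a then true else if x = b then false else c.sign x) = false) =
        insert b (univ.filter fun x => c.π x = x ∧ c.sign x = false) := by
      ext x
      simp only [mem_insert, mem_filter, mem_univ, true_and, c.swap_mul_π_apply_eq_self_iff h]
      grind
    rw [hplus, hminus, card_insert_of_notMem (by simp [h, hne.symm]),
      card_insert_of_notMem (by simp [hb, hne])]
    have := c.charge
    omega

lemma clanCov_conj_swap (c : Clan p q) {a b : Fin (p + q)} (hab : (b : ℕ) = a + 1)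
    (hdes : c.π b < c.π a) (hne : c.π a ≠ b) : ClanCov a b c (c.conj (swap a b)) :=
  ⟨hab, Or.inl ⟨by simp [conj], invNum_swap_mul_mul_swap_add_two c.invol hab hdes hne,
    fun x _ => by simp [conj]⟩⟩

lemma clanCov_splitStrand (c : Clan p q) {a b : Fin (p + q)} (hab : (b : ℕ) = a + 1)
    (h : c.π a = b) : ClanCov a b c (c.splitStrand (Fin.ne_of_val_ne (by omega)) h) :=
  ⟨hab, Or.inr ⟨h, rfl, by simp [splitStrand, Fin.ext_iff, hab],
    fun x hxa hxb => by simp [splitStrand, hxa, hxb]⟩⟩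

lemma forall_not_clanCov_iff (c : Clan p q) :
    (∀ (a b : Fin (p + q)) (c' : Clan p q), ¬ ClanCov a b c c') ↔ c.π = 1 := by
  constructor
  · intro hmax
    by_contra hne
    obtain ⟨a, b, hab, hdes⟩ := Perm.exists_descent_of_ne_one hne
    by_cases h : c.π a = b
    · exact hmax a b _ (c.clanCov_splitStrand hab h)
    · exact hmax a b _ (c.clanCov_conj_swap hab hdes h)
  · rintro h a b c' ⟨hab, ⟨-, hlen, -⟩ | ⟨hπa, -⟩⟩
    · rw [h, invNum_one] at hlen
      omega
    · rw [h, Perm.one_apply] at hπa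
      rw [hπa] at hab
      omega

lemma card_sign_eq_true_of_π_eq_one (c : Clan p q) (h : c.π = 1) :
    #(univ.filter fun x => c.sign x = true) = p := by
  have hcharge := c.charge
  simp only [h, Perm.one_apply, true_and] at hcharge
  have htotal := card_filter_add_card_filter_not (s := univ) fun x => c.sign x = true
  simp only [Bool.not_eq_true, card_univ, Fintype.card_fin] at htotal
  omega

def ofPlusSet (A : Finset (Fin (p + q))) (hA : #A = p) : Clan p q where
  π := 1
  invol := one_mul 1
  sign x := decide (x ∈ A)
  signFix _ hx := absurd rfl hx
  charge := by
    have hplus : (univ.filter fun x : Fin (p + q) => decide (x ∈ A) = true) = A := by ext; simp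
    have hminus : (univ.filter fun x : Fin (p + q) => decide (x ∈ A) = false) = univ \ A := by
      ext; simp
    simp only [Perm.one_apply, true_and, hplus, hminus, card_univ_sdiff, Fintype.card_fin, hA]
    omega

def equivPlusSet : {c : Clan p q // c.π = 1} ≃ {A : Finset (Fin (p + q)) // #A = p} where
  toFun c := ⟨univ.filter fun x => c.1.sign x = true, c.1.card_sign_eq_true_of_π_eq_one c.2⟩
  invFun A := ⟨ofPlusSet A.1 A.2, rfl⟩
  left_inv c := Subtype.ext <| Clan.ext c.2.symm <| funext fun x => by simp [ofPlusSet]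
  right_inv A := Subtype.ext <| by ext; simp [ofPlusSet]

lemma card_π_eq_one : Nat.card {c : Clan p q // c.π = 1} = (p + q).choose p := by
  rw [Nat.card_congr equivPlusSet, Nat.card_eq_fintype_card, Fintype.card_finset_len,
    Fintype.card_fin]

end Clan

theorem stmt18_general (p q : ℕ) :
    {c : Clan p q | ∀ (a b : Fin (p + q)) (c'' : Clan p q), ¬ ClanCov a b c c''} =
      {c : Clan p q | c.π = 1} ∧
    Nat.card {c : Clan p q // c.π = 1} = Nat.choose (p + q) p :=
  ⟨Set.ext Clan.forall_not_clanCov_iff, Clan.card_π_eq_one⟩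

/-- The weak order poset of `(p,q)`-clans (`p, q ≥ 1`) has exactly `C(p+q, p)` maximal
elements, namely exactly the clans whose underlying involution is the identity (one for
each choice of `p` positions marked `+` and `q` positions marked `−`). -/
theorem stmt18 (p q : ℕ) (hp : 1 ≤ p) (hq : 1 ≤ q) :
    {c : Clan p q | ∀ (a b : Fin (p + q)) (c'' : Clan p q), ¬ ClanCov a b c c''} =
      {c : Clan p q | c.π = 1} ∧
    Nat.card {c : Clan p q // c.π = 1} = Nat.choose (p + q) p :=
  stmt18_general p q
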